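/- arXiv:2007.02597 — 3 statements merged into one kernel-verified Lean document; each statement's English description precedes it below -/
import Mathlib

section
/- Velocity at the center of an axisymmetric droplet: Let r : [0,π] → (0,∞) be Lipschitz and let B = { z e(θ,φ) : θ ∈ [0,π], φ ∈ [0,2π], 0 ≤ z ≤ r(θ) } ⊂ ℝ³ be the corresponding axisymmetric body. Define u(x) = −∫_B Φ(x−y) e₃ dy. Then the first two components of u(0) vanish, and u(0) · e₃ = −(1/4) ∫₀^π r(θ)² sin θ (1 − (1/2) sin² θ) dθ; in particular u(0)·e₃ < 0. -/
/- Velocity at the center of an axisymmetric droplet: for a Lipschitz radius function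
   r : [0,π] → (0,∞) and B = { z e(θ,φ) : 0 ≤ z ≤ r(θ) }, the velocity u(0) = −∫_B Φ(0−y) e₃ dy
   has vanishing horizontal components and
   u(0)·e₃ = −(1/4) ∫₀^π r(θ)² sin θ (1 − sin²θ/2) dθ < 0. -/

noncomputable section
open MeasureTheory Real Set Filter RealInnerProductSpace

def V3 (a b c : ℝ) : EuclideanSpace ℝ (Fin 3) := (WithLp.equiv 2 (Fin 3 → ℝ)).symm ![a, b, c]

def e3 : EuclideanSpace ℝ (Fin 3) := V3 0 0 1

/-- Spherical parametrization `e(θ,φ) = (cos φ sin θ, sin φ sin θ, cos θ)`. -/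
def eSph (θ φ : ℝ) : EuclideanSpace ℝ (Fin 3) :=
  V3 (Real.cos φ * Real.sin θ) (Real.sin φ * Real.sin θ) (Real.cos θ)

/-- Oseen tensor `Φ(x) = (8π)⁻¹ (I₃/|x| + x⊗x/|x|³)` applied to a vector `v`. -/
def oseen (x v : EuclideanSpace ℝ (Fin 3)) : EuclideanSpace ℝ (Fin 3) :=
  (8 * π)⁻¹ • (‖x‖⁻¹ • v + (‖x‖ ^ 3)⁻¹ • (⟪x, v⟫ • x))

/-- The axisymmetric body `B = { z e(θ,φ) : θ ∈ [0,π], φ ∈ [0,2π], 0 ≤ z ≤ r(θ) }`. -/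
def axiBody (r : ℝ → ℝ) : Set (EuclideanSpace ℝ (Fin 3)) :=
  {x | ∃ θ ∈ Set.Icc (0:ℝ) π, ∃ φ ∈ Set.Icc (0:ℝ) (2 * π), ∃ z : ℝ,
    0 ≤ z ∧ z ≤ r θ ∧ x = z • eSph θ φ}

/-- The velocity at the origin: `u(0) = −∫_B Φ(0−y) e₃ dy`. -/
def centerVel (r : ℝ → ℝ) : EuclideanSpace ℝ (Fin 3) :=
  -∫ y in axiBody r, oseen (0 - y) e3

/-! In spherical coordinates `y = z e(θ, φ)` the volume element is `z² sin θ dz dφ dθ`, and since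
`Φ` is even and homogeneous of degree `-1`, `Φ(-y) e₃ = (8π z)⁻¹ (e₃ + cos θ e(θ, φ))`. The Jacobian
cancels the singularity at the origin, the `z`-integral contributes `r(θ)² / 2`, and the
`φ`-integral kills the horizontal part of `e(θ, φ)`, leaving
`(8π)⁻¹ · 2π · r² / 2 · sin θ (1 + cos² θ) = (1/4) r² sin θ (1 - sin² θ / 2)` times `e₃`. -/

local notation "ℝ³" => EuclideanSpace ℝ (Fin 3)

section Fiberwise

variable {α β E : Type*} [MeasurableSpace α] [MeasurableSpace β] {μ : Measure α} {ν : Measure β}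
  [SFinite μ] [SFinite ν] [NormedAddCommGroup E] [NormedSpace ℝ E]

theorem setIntegral_prod_fiberwise {s : Set α} {t : α → Set β} {f : α × β → E}
    (hs : MeasurableSet s) (hst : MeasurableSet {x : α × β | x.1 ∈ s ∧ x.2 ∈ t x.1})
    (hf : IntegrableOn f {x : α × β | x.1 ∈ s ∧ x.2 ∈ t x.1} (μ.prod ν)) :
    ∫ x in {x : α × β | x.1 ∈ s ∧ x.2 ∈ t x.1}, f x ∂μ.prod ν
      = ∫ a in s, ∫ b in t a, f (a, b) ∂ν ∂μ := by
  rw [← integral_indicator hst, integral_prod _ (hf.integrable_indicator hst),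
    ← integral_indicator hs]
  congr 1
  funext a
  by_cases ha : a ∈ s
  · have hfiber : Prod.mk a ⁻¹' {x : α × β | x.1 ∈ s ∧ x.2 ∈ t x.1} = t a := by
      ext b; simp [ha]
    rw [indicator_of_mem ha, ← hfiber, ← integral_indicator (measurable_prodMk_left hst)]
    rfl
  · rw [indicator_of_notMem ha]
    simp [ha]

end Fiberwise

lemma det_toEuclideanCLM {𝕜 n : Type*} [RCLike 𝕜] [Fintype n] [DecidableEq n]
    (A : Matrix n n 𝕜) : (Matrix.toEuclideanCLM (𝕜 := 𝕜) A).det = A.det := by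
  rw [ContinuousLinearMap.det, Matrix.coe_toEuclideanCLM_eq_toEuclideanLin,
    Matrix.toEuclideanLin_eq_toLin_orthonormal, LinearMap.det_toLin]

lemma volume_euclideanSpace_apply_eq_zero {ι : Type*} [Fintype ι] (i : ι) :
    volume {y : EuclideanSpace ℝ ι | y i = 0} = 0 := by
  classical
  refine Measure.addHaar_submodule volume (LinearMap.ker (EuclideanSpace.projₗ i)) fun h => ?_
  have : EuclideanSpace.single i (1 : ℝ) ∈ LinearMap.ker (EuclideanSpace.projₗ i) := by
    rw [h]; trivial
  simp at this

lemma integral_add_mul_cos_add_mul_sin (a b c : ℝ) :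
    ∫ φ in 0..2 * π, (a + b * cos φ + c * sin φ) = 2 * π * a := by
  have hint {g : ℝ → ℝ} (hg : Continuous g) : IntervalIntegrable g volume 0 (2 * π) :=
    hg.intervalIntegrable _ _
  rw [intervalIntegral.integral_add (hint (by fun_prop)) (hint (by fun_prop)),
    intervalIntegral.integral_add (hint (by fun_prop)) (hint (by fun_prop)),
    intervalIntegral.integral_const_mul, intervalIntegral.integral_const_mul, integral_cos,
    integral_sin]
  simp

lemma V3_apply_two (a b c : ℝ) : V3 a b c 2 = c := rfl

lemma e3_apply_two : e3 2 = 1 := rfl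

lemma inner_e3 (v : ℝ³) : ⟪v, e3⟫ = v 2 := by
  simp [e3, V3, PiLp.inner_apply, Fin.sum_univ_three]

lemma inner_eSph (θ φ : ℝ) (v : ℝ³) :
    ⟪v, eSph θ φ⟫ = v 0 * (cos φ * sin θ) + v 1 * (sin φ * sin θ) + v 2 * cos θ := by
  simp [eSph, V3, PiLp.inner_apply, Fin.sum_univ_three, mul_comm]

lemma norm_eSph (θ φ : ℝ) : ‖eSph θ φ‖ = 1 := by
  rw [EuclideanSpace.norm_eq, Real.sqrt_eq_one]
  simp only [eSph, V3, Fin.sum_univ_three, Real.norm_eq_abs, sq_abs, WithLp.equiv_symm_apply,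
    PiLp.toLp_apply, Matrix.cons_val_zero, Matrix.cons_val_one, Matrix.cons_val_two,
    Matrix.head_cons, Matrix.tail_cons]
  linear_combination sin θ ^ 2 * sin_sq_add_cos_sq φ + sin_sq_add_cos_sq θ

@[fun_prop]
lemma Continuous.eSph {α : Type*} [TopologicalSpace α] {f g : α → ℝ} (hf : Continuous f)
    (hg : Continuous g) : Continuous fun x => eSph (f x) (g x) := by
  refine (PiLp.continuous_toLp 2 _).comp (continuous_pi fun i => ?_)
  fin_cases i <;> simp <;> fun_prop

lemma oseen_neg_smul {u : ℝ³} (hu : ‖u‖ = 1) {z : ℝ} (hz : 0 < z) (v : ℝ³) :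
    oseen (0 - z • u) v = (8 * π * z)⁻¹ • (v + ⟪u, v⟫ • u) := by
  have hnorm : ‖0 - z • u‖ = z := by
    rw [zero_sub, norm_neg, norm_smul, hu, mul_one, norm_of_nonneg hz.le]
  rw [oseen, hnorm, zero_sub, inner_neg_left, real_inner_smul_left]
  match_scalars <;> field_simp

-- Half-open in `φ` and `z` so that the spherical chart is injective on it and its image misses
-- only points of the plane `y₁ = 0` of `axiBody ρ`.
def sphericalBox (ρ : ℝ → ℝ) : Set (ℝ × ℝ × ℝ) :=
  {x | x.1 ∈ Ioo 0 π ∧ x.2 ∈ Ioc 0 (2 * π) ×ˢ Ioc 0 (ρ x.1)}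

lemma measurableSet_sphericalBox {ρ : ℝ → ℝ} (hρ : Measurable ρ) :
    MeasurableSet (sphericalBox ρ) := by
  unfold sphericalBox
  simp only [mem_prod, mem_Ioc, mem_Ioo]
  measurability

lemma integrableOn_sphericalBox {E : Type*} [NormedAddCommGroup E] {ρ : ℝ → ℝ}
    (hρ : Continuous ρ) {f : ℝ × ℝ × ℝ → E} (hf : Continuous f) :
    IntegrableOn f (sphericalBox ρ) := by
  obtain ⟨M, hM⟩ := (isCompact_Icc (a := 0) (b := π)).bddAbove_image hρ.continuousOn
  have hbox : IsCompact (Icc 0 π ×ˢ Icc 0 (2 * π) ×ˢ Icc 0 M) :=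
    isCompact_Icc.prod (isCompact_Icc.prod isCompact_Icc)
  refine (hf.continuousOn.integrableOn_compact hbox).mono_set ?_
  rintro ⟨θ, φ, z⟩ ⟨hθ, hφ, hz⟩
  exact ⟨Ioo_subset_Icc_self hθ, Ioc_subset_Icc_self hφ, hz.1.le,
    hz.2.trans (hM (mem_image_of_mem ρ (Ioo_subset_Icc_self hθ)))⟩

lemma integral_sphericalBox {E : Type*} [NormedAddCommGroup E] [NormedSpace ℝ E] {ρ : ℝ → ℝ}
    (hρ : Continuous ρ) (hρ_nonneg : ∀ θ ∈ Ioo 0 π, 0 ≤ ρ θ) {f : ℝ × ℝ × ℝ → E}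
    (hf : Continuous f) :
    ∫ x in sphericalBox ρ, f x = ∫ θ in 0..π, ∫ φ in 0..2 * π, ∫ z in 0..ρ θ, f (θ, φ, z) := by
  have hbox := integrableOn_sphericalBox hρ hf
  rw [Measure.volume_eq_prod] at hbox ⊢
  rw [sphericalBox, setIntegral_prod_fiberwise (t := fun θ => Ioc 0 (2 * π) ×ˢ Ioc 0 (ρ θ))
      measurableSet_Ioo (measurableSet_sphericalBox hρ.measurable) hbox,
    intervalIntegral.integral_of_le pi_pos.le, integral_Ioc_eq_integral_Ioo]
  refine setIntegral_congr_fun measurableSet_Ioo fun θ hθ => ?_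
  have hslice : IntegrableOn (fun q : ℝ × ℝ => f (θ, q)) (Icc 0 (2 * π) ×ˢ Icc 0 (ρ θ))
      (volume.prod volume) := by
    rw [← Measure.volume_eq_prod]
    exact (hf.comp (Continuous.prodMk_right θ)).continuousOn.integrableOn_compact
      (isCompact_Icc.prod isCompact_Icc)
  rw [Measure.volume_eq_prod,
    setIntegral_prod _ (hslice.mono_set (prod_mono Ioc_subset_Icc_self Ioc_subset_Icc_self)),
    intervalIntegral.integral_of_le (by positivity)]
  refine setIntegral_congr_fun measurableSet_Ioc fun φ _ => ?_
  rw [intervalIntegral.integral_of_le (hρ_nonneg θ hθ)]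

def sphericalChart (p : ℝ³) : ℝ³ := p 2 • eSph (p 0) (p 1)

def sphericalJacobian (p : ℝ³) : Matrix (Fin 3) (Fin 3) ℝ :=
  !![p 2 * cos (p 1) * cos (p 0), -(p 2 * sin (p 1) * sin (p 0)), cos (p 1) * sin (p 0);
     p 2 * sin (p 1) * cos (p 0), p 2 * cos (p 1) * sin (p 0), sin (p 1) * sin (p 0);
     -(p 2 * sin (p 0)), 0, cos (p 0)]

lemma det_sphericalJacobian (p : ℝ³) : (sphericalJacobian p).det = p 2 ^ 2 * sin (p 0) := by
  simp only [sphericalJacobian, Matrix.det_fin_three, Matrix.of_apply, Matrix.cons_val',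
    Matrix.cons_val_zero, Matrix.cons_val_one, Matrix.cons_val, Matrix.cons_val_fin_one]
  linear_combination (p 2 ^ 2 * sin (p 0) * cos (p 0) ^ 2 + p 2 ^ 2 * sin (p 0) ^ 3) *
      sin_sq_add_cos_sq (p 1) + p 2 ^ 2 * sin (p 0) * sin_sq_add_cos_sq (p 0)

lemma hasFDerivAt_sphericalChart (p : ℝ³) :
    HasFDerivAt sphericalChart (Matrix.toEuclideanCLM (𝕜 := ℝ) (sphericalJacobian p)) p := by
  rw [← hasFDerivWithinAt_univ, hasFDerivWithinAt_piLp]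
  have hθ := PiLp.hasFDerivAt_apply (𝕜 := ℝ) 2 p 0
  have hφ := PiLp.hasFDerivAt_apply (𝕜 := ℝ) 2 p 1
  have hz := PiLp.hasFDerivAt_apply (𝕜 := ℝ) 2 p 2
  intro i
  refine HasFDerivAt.hasFDerivWithinAt ?_
  fin_cases i <;>
    [refine (hz.mul (hφ.cos.mul hθ.sin)).congr_fderiv (ContinuousLinearMap.ext fun w => ?_);
     refine (hz.mul (hφ.sin.mul hθ.sin)).congr_fderiv (ContinuousLinearMap.ext fun w => ?_);
     refine (hz.mul hθ.cos).congr_fderiv (ContinuousLinearMap.ext fun w => ?_)] <;>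
  · simp only [sphericalJacobian, ContinuousLinearMap.comp_apply, Matrix.ofLp_toEuclideanCLM,
      Matrix.mulVec, dotProduct, Fin.sum_univ_three, Matrix.of_apply, Matrix.cons_val',
      Matrix.cons_val_fin_one, Matrix.cons_val_zero, Matrix.cons_val_one, Matrix.cons_val,
      Fin.zero_eta, Fin.mk_one, Fin.reduceFinMk, PiLp.proj_apply, Pi.mul_apply, add_apply,
      smul_apply, smul_eq_mul]
    ring

lemma injOn_sphericalChart :
    InjOn sphericalChart {p : ℝ³ | p 0 ∈ Ioo 0 π ∧ p 1 ∈ Ioc 0 (2 * π) ∧ 0 < p 2} := by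
  rintro p ⟨hθ, hφ, hr⟩ q ⟨hθ', hφ', hr'⟩ h
  have hx : p 2 * (cos (p 1) * sin (p 0)) = q 2 * (cos (q 1) * sin (q 0)) := congrArg (· 0) h
  have hy : p 2 * (sin (p 1) * sin (p 0)) = q 2 * (sin (q 1) * sin (q 0)) := congrArg (· 1) h
  have hz : p 2 * cos (p 0) = q 2 * cos (q 0) := congrArg (· 2) h
  have h2 : p 2 = q 2 := by
    simpa [sphericalChart, norm_smul, norm_eSph, abs_of_pos hr, abs_of_pos hr'] using
      congrArg norm h
  have h0 : p 0 = q 0 := by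
    refine injOn_cos (Ioo_subset_Icc_self hθ) (Ioo_subset_Icc_self hθ') ?_
    rw [h2] at hz
    exact mul_left_cancel₀ hr'.ne' hz
  have hq : q 2 * sin (q 0) ≠ 0 := (mul_pos hr' (sin_pos_of_pos_of_lt_pi hθ'.1 hθ'.2)).ne'
  have hcos : cos (p 1) = cos (q 1) := by
    rw [h0, h2] at hx
    exact mul_right_cancel₀ hq (by linear_combination hx)
  have hsin : sin (p 1) = sin (q 1) := by
    rw [h0, h2] at hy
    exact mul_right_cancel₀ hq (by linear_combination hy)
  have h1 : p 1 = q 1 := by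
    have hcos_sub : cos (p 1 - q 1) = 1 := by
      rw [cos_sub, hcos, hsin, ← sq, ← sq, cos_sq_add_sin_sq]
    have := (cos_eq_one_iff_of_lt_of_lt (by linarith [hφ.1, hφ'.2])
      (by linarith [hφ.2, hφ'.1])).1 hcos_sub
    linarith
  ext i
  fin_cases i <;> assumption

def coordTriple : ℝ³ ≃ᵐ ℝ × ℝ × ℝ :=
  (MeasurableEquiv.toLp 2 (Fin 3 → ℝ)).symm.trans
    ((MeasurableEquiv.piFinSuccAbove (fun _ : Fin 3 => ℝ) 0).trans
      ((MeasurableEquiv.refl ℝ).prodCongr MeasurableEquiv.finTwoArrow))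

lemma measurePreserving_coordTriple : MeasurePreserving coordTriple :=
  (((MeasurePreserving.id volume).prod (volume_preserving_finTwoArrow ℝ)).comp
    (measurePreserving_piFinSuccAbove (fun _ : Fin 3 => volume) 0)).comp
    (EuclideanSpace.volume_preserving_symm_measurableEquiv_toLp (Fin 3))

lemma sphericalChart_image_ae_eq_axiBody (ρ : ℝ → ℝ) :
    sphericalChart '' (coordTriple ⁻¹' sphericalBox ρ) =ᵐ[volume] axiBody ρ := by
  have himage : sphericalChart '' (coordTriple ⁻¹' sphericalBox ρ) ⊆ axiBody ρ := by
    rintro _ ⟨p, ⟨hθ, hφ, hz⟩, rfl⟩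
    exact ⟨p 0, Ioo_subset_Icc_self hθ, p 1, Ioc_subset_Icc_self hφ, p 2, hz.1.le, hz.2, rfl⟩
  have hrest : axiBody ρ \ sphericalChart '' (coordTriple ⁻¹' sphericalBox ρ) ⊆
      {y : ℝ³ | y 1 = 0} := by
    rintro _ ⟨⟨θ, hθ, φ, hφ, z, hz0, hzρ, rfl⟩, hnot⟩
    by_contra hy
    have hy' : z * (sin φ * sin θ) ≠ 0 := hy
    simp only [mul_ne_zero_iff] at hy'
    obtain ⟨hz, hsinφ, hsinθ⟩ := hy'
    have hθ0 : 0 < θ := lt_of_le_of_ne hθ.1 fun h => hsinθ (by rw [← h, sin_zero])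
    have hθπ : θ < π := lt_of_le_of_ne hθ.2 fun h => hsinθ (by rw [h, sin_pi])
    have hφ0 : 0 < φ := lt_of_le_of_ne hφ.1 fun h => hsinφ (by rw [← h, sin_zero])
    exact hnot ⟨V3 θ φ z, ⟨⟨hθ0, hθπ⟩, ⟨hφ0, hφ.2⟩, lt_of_le_of_ne hz0 (Ne.symm hz), hzρ⟩, rfl⟩
  refine ae_eq_set.2 ⟨?_, measure_mono_null hrest (volume_euclideanSpace_apply_eq_zero 1)⟩
  rw [sdiff_eq_empty.2 himage, measure_empty]

theorem integral_axiBody {F : Type*} [NormedAddCommGroup F] [NormedSpace ℝ F] {ρ : ℝ → ℝ}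
    (hρ : Measurable ρ) (f : ℝ³ → F) :
    ∫ y in axiBody ρ, f y
      = ∫ x in sphericalBox ρ, (x.2.2 ^ 2 * sin x.1) • f (x.2.2 • eSph x.1 x.2.1) := by
  have hs : MeasurableSet (coordTriple ⁻¹' sphericalBox ρ) :=
    coordTriple.measurable (measurableSet_sphericalBox hρ)
  have hsub : coordTriple ⁻¹' sphericalBox ρ ⊆
      {p | p 0 ∈ Ioo 0 π ∧ p 1 ∈ Ioc 0 (2 * π) ∧ 0 < p 2} :=
    fun _ hp => ⟨hp.1, hp.2.1, hp.2.2.1⟩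
  rw [← setIntegral_congr_set (sphericalChart_image_ae_eq_axiBody ρ),
    integral_image_eq_integral_abs_det_fderiv_smul volume hs
      (fun p _ => (hasFDerivAt_sphericalChart p).hasFDerivWithinAt)
      (injOn_sphericalChart.mono hsub) f,
    ← measurePreserving_coordTriple.setIntegral_preimage_emb coordTriple.measurableEmbedding]
  refine setIntegral_congr_fun hs fun p ⟨hθ, _, hz⟩ => ?_
  have hsin : 0 < sin (p 0) := sin_pos_of_pos_of_lt_pi hθ.1 hθ.2
  have hr : 0 < p 2 := hz.1
  rw [det_toEuclideanCLM, det_sphericalJacobian, abs_of_pos (by positivity)]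
  rfl

lemma smul_oseen_neg_smul_eSph {θ φ z : ℝ} (hz : 0 < z) :
    (z ^ 2 * sin θ) • oseen (0 - z • eSph θ φ) e3
      = ((8 * π)⁻¹ * z * sin θ) • (e3 + cos θ • eSph θ φ) := by
  have hcos : ⟪eSph θ φ, e3⟫ = cos θ := inner_e3 _
  rw [oseen_neg_smul (norm_eSph θ φ) hz, hcos, smul_smul]
  congr 1
  field_simp

lemma integral_oseen_axiBody {ρ : ℝ → ℝ} (hρ : Continuous ρ)
    (hρ_nonneg : ∀ θ ∈ Ioo 0 π, 0 ≤ ρ θ) :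
    ∫ y in axiBody ρ, oseen (0 - y) e3
      = ((1 / 4) * ∫ θ in 0..π, ρ θ ^ 2 * sin θ * (1 - sin θ ^ 2 / 2)) • e3 := by
  set w : ℝ × ℝ × ℝ → ℝ³ := fun x =>
    ((8 * π)⁻¹ * x.2.2 * sin x.1) • (e3 + cos x.1 • eSph x.1 x.2.1) with hw_def
  have hw : Continuous w := by fun_prop
  rw [integral_axiBody hρ.measurable,
    setIntegral_congr_fun (measurableSet_sphericalBox hρ.measurable) fun x hx =>
      smul_oseen_neg_smul_eSph hx.2.2.1]
  refine ext_inner_left ℝ fun v => ?_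
  rw [← integral_inner (integrableOn_sphericalBox hρ hw) v,
    integral_sphericalBox hρ hρ_nonneg (continuous_const.inner hw)]
  have hpoint : ∀ θ φ z, ⟪v, w (θ, φ, z)⟫ = z * ((8 * π)⁻¹ * sin θ *
      (v 2 * (1 + cos θ ^ 2) + v 0 * cos θ * sin θ * cos φ + v 1 * cos θ * sin θ * sin φ)) := by
    intro θ φ z
    simp only [hw_def, inner_smul_right, inner_add_right, inner_e3, inner_eSph]
    ring
  have hθ_slice : ∀ θ, ∫ φ in 0..2 * π, ∫ z in 0..ρ θ, ⟪v, w (θ, φ, z)⟫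
      = v 2 * (1 / 4) * (ρ θ ^ 2 * sin θ * (1 - sin θ ^ 2 / 2)) := by
    intro θ
    simp only [hpoint, intervalIntegral.integral_mul_const, integral_id,
      intervalIntegral.integral_const_mul, integral_add_mul_cos_add_mul_sin]
    field_simp
    linear_combination 8 * ρ θ ^ 2 * sin θ * v 2 * sin_sq_add_cos_sq θ
  rw [intervalIntegral.integral_congr fun θ _ => hθ_slice θ, intervalIntegral.integral_const_mul,
    inner_smul_right, inner_e3]
  ring

lemma integral_sq_mul_sin_mul_pos {ρ : ℝ → ℝ} (hρ : Continuous ρ)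
    (hρ_pos : ∀ θ ∈ Ioo 0 π, 0 < ρ θ) :
    0 < ∫ θ in 0..π, ρ θ ^ 2 * sin θ * (1 - sin θ ^ 2 / 2) := by
  refine intervalIntegral.intervalIntegral_pos_of_pos_on
    (Continuous.intervalIntegrable (by fun_prop) _ _) (fun θ hθ => ?_) pi_pos
  have hsin : 0 < sin θ := sin_pos_of_pos_of_lt_pi hθ.1 hθ.2
  have hfactor : 0 < 1 - sin θ ^ 2 / 2 := by nlinarith [sin_le_one θ]
  have := hρ_pos θ hθ
  positivity

lemma axiBody_congr {r ρ : ℝ → ℝ} (h : EqOn r ρ (Icc 0 π)) : axiBody r = axiBody ρ := by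
  ext x
  constructor <;> rintro ⟨θ, hθ, φ, hφ, z, hz0, hzr, rfl⟩
  · exact ⟨θ, hθ, φ, hφ, z, hz0, h hθ ▸ hzr, rfl⟩
  · exact ⟨θ, hθ, φ, hφ, z, hz0, (h hθ).symm ▸ hzr, rfl⟩

theorem velocity_at_center_of_axisymmetric_droplet (r : ℝ → ℝ) (K : NNReal)
    (hLip : LipschitzOnWith K r (Set.Icc 0 π))
    (hpos : ∀ θ ∈ Set.Icc (0:ℝ) π, 0 < r θ) :
    ⟪centerVel r, V3 1 0 0⟫ = 0 ∧
    ⟪centerVel r, V3 0 1 0⟫ = 0 ∧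
    ⟪centerVel r, e3⟫
      = -(1 / 4) * ∫ θ in (0:ℝ)..π, r θ ^ 2 * Real.sin θ * (1 - Real.sin θ ^ 2 / 2) ∧
    ⟪centerVel r, e3⟫ < 0 := by
  obtain ⟨ρ, hρ, hrρ⟩ := hLip.extend_real
  have hρ_pos : ∀ θ ∈ Icc 0 π, 0 < ρ θ := fun θ hθ => hrρ hθ ▸ hpos θ hθ
  set I := ∫ θ in 0..π, ρ θ ^ 2 * sin θ * (1 - sin θ ^ 2 / 2)
  have hrI : ∫ θ in 0..π, r θ ^ 2 * sin θ * (1 - sin θ ^ 2 / 2) = I :=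
    intervalIntegral.integral_congr fun θ hθ => by
      rw [hrρ (uIcc_of_le pi_pos.le ▸ hθ : θ ∈ Icc 0 π)]
  have hvel : centerVel r = -((1 / 4) * I) • e3 := by
    rw [centerVel, axiBody_congr hrρ, integral_oseen_axiBody hρ.continuous
      fun θ hθ => (hρ_pos θ (Ioo_subset_Icc_self hθ)).le, neg_smul]
  have hI : 0 < I :=
    integral_sq_mul_sin_mul_pos hρ.continuous fun θ hθ => hρ_pos θ (Ioo_subset_Icc_self hθ)
  simp only [hvel, real_inner_smul_left, real_inner_comm _ e3, inner_e3, hrI, V3_apply_two,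
    e3_apply_two, mul_zero, mul_one, true_and]
  exact ⟨by ring, by linarith⟩
end
end

section
/- For every d ∈ (−1,1), the map g(θ) = d + r̄_d(θ) cos θ is continuous and strictly decreasing on [0,π], with g(0) = 1 and g(π) = −1; hence g is a bijection from [0,π] onto [−1,1], and θ ↦ arccos(g(θ)) is a bijection of [0,π] onto itself. Moreover, at every θ ∈ (0,π), d/dθ ( r̄_d(θ) cos θ ) = −r̄_d(θ)² sin θ / √(1 − d² sin² θ) ≤ 0. -/
/- For d ∈ (−1,1), the map g(θ) = d + r̄_d(θ) cos θ is continuous and strictly decreasing on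
   [0,π], g(0) = 1, g(π) = −1, it is a bijection from [0,π] onto [−1,1], θ ↦ arccos(g(θ)) is a
   bijection of [0,π] onto itself, and d/dθ (r̄_d(θ) cos θ) = −r̄_d(θ)² sin θ / √(1 − d² sin² θ) ≤ 0
   on (0,π). -/

noncomputable section
open MeasureTheory Real Set Filter

/-- `r̄_d(θ) = −d cos θ + √(1 − d² sin² θ)`. -/
def rbar (d θ : ℝ) : ℝ := -d * Real.cos θ + Real.sqrt (1 - d ^ 2 * Real.sin θ ^ 2)

/-! Since `1 - d² sin² θ - d² cos² θ = 1 - d² > 0`, the square root dominates `|d cos θ|` and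
`r̄_d > 0`. Writing `S = √(1 - d² sin² θ)`, one finds `r̄_d' = d sin θ · r̄_d / S` and hence
`(r̄_d cos θ)' = -r̄_d sin θ (S - d cos θ) / S = -r̄_d² sin θ / S`, negative on `(0, π)`.
So `g` is strictly decreasing from `g 0 = 1` to `g π = -1`, and the intermediate value theorem
makes it a bijection onto `[-1, 1]`, which `arccos` maps bijectively back onto `[0, π]`. -/

section rbar

variable {d : ℝ}

lemma one_sub_sq_mul_sin_sq_pos (hd : d ^ 2 < 1) (θ : ℝ) : 0 < 1 - d ^ 2 * sin θ ^ 2 := by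
  nlinarith [sin_sq_le_one θ, sq_nonneg d]

lemma rbar_pos (hd : d ^ 2 < 1) (θ : ℝ) : 0 < rbar d θ := by
  have hS := sq_sqrt (one_sub_sq_mul_sin_sq_pos hd θ).le
  have hS_pos := sqrt_pos.2 (one_sub_sq_mul_sin_sq_pos hd θ)
  have hdcos : (d * cos θ) ^ 2 < √(1 - d ^ 2 * sin θ ^ 2) ^ 2 := by
    rw [hS]; nlinarith [sin_sq_add_cos_sq θ]
  have := abs_lt.1 (abs_lt_of_sq_lt_sq hdcos hS_pos.le)
  unfold rbar
  linarith [this.1]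

lemma rbar_zero : rbar d 0 = 1 - d := by simp [rbar]; ring

lemma rbar_pi : rbar d π = 1 + d := by simp [rbar]; ring

@[fun_prop]
lemma continuous_rbar (d : ℝ) : Continuous (rbar d) := by
  unfold rbar; fun_prop

lemma hasDerivAt_rbar {θ : ℝ} (hθ : 0 < 1 - d ^ 2 * sin θ ^ 2) :
    HasDerivAt (rbar d) (d * sin θ * rbar d θ / √(1 - d ^ 2 * sin θ ^ 2)) θ := by
  have hsqrt : HasDerivAt (fun x => √(1 - d ^ 2 * sin x ^ 2))
      (-(d ^ 2 * (2 * sin θ * cos θ)) / (2 * √(1 - d ^ 2 * sin θ ^ 2))) θ := by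
    simpa using (((hasDerivAt_sin θ).pow 2).const_mul (d ^ 2)).const_sub 1 |>.sqrt hθ.ne'
  have hS : √(1 - d ^ 2 * sin θ ^ 2) ≠ 0 := (sqrt_pos.2 hθ).ne'
  refine (((hasDerivAt_cos θ).const_mul (-d)).add hsqrt).congr_deriv ?_
  unfold rbar
  field_simp
  ring

lemma hasDerivAt_rbar_mul_cos {θ : ℝ} (hθ : 0 < 1 - d ^ 2 * sin θ ^ 2) :
    HasDerivAt (fun θ' => rbar d θ' * cos θ')
      (-(rbar d θ) ^ 2 * sin θ / √(1 - d ^ 2 * sin θ ^ 2)) θ := by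
  have hS : √(1 - d ^ 2 * sin θ ^ 2) ≠ 0 := (sqrt_pos.2 hθ).ne'
  refine ((hasDerivAt_rbar hθ).mul (hasDerivAt_cos θ)).congr_deriv ?_
  unfold rbar
  field_simp
  ring

lemma neg_rbar_sq_mul_sin_div_sqrt_neg (hd : d ^ 2 < 1) {θ : ℝ} (hθ : θ ∈ Ioo 0 π) :
    -(rbar d θ) ^ 2 * sin θ / √(1 - d ^ 2 * sin θ ^ 2) < 0 := by
  refine div_neg_of_neg_of_pos ?_ (sqrt_pos.2 (one_sub_sq_mul_sin_sq_pos hd θ))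
  rw [neg_mul]
  exact neg_neg_of_pos (mul_pos (pow_pos (rbar_pos hd θ) 2) (sin_pos_of_pos_of_lt_pi hθ.1 hθ.2))

lemma strictAntiOn_add_rbar_mul_cos (hd : d ^ 2 < 1) :
    StrictAntiOn (fun θ => d + rbar d θ * cos θ) (Icc 0 π) := by
  refine strictAntiOn_of_deriv_neg (convex_Icc 0 π) (by fun_prop) fun θ hθ => ?_
  rw [interior_Icc] at hθ
  rw [((hasDerivAt_rbar_mul_cos (one_sub_sq_mul_sin_sq_pos hd θ)).const_add d).deriv]
  exact neg_rbar_sq_mul_sin_div_sqrt_neg hd hθ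

end rbar

theorem Real.bijOn_arccos : BijOn arccos (Icc (-1) 1) (Icc 0 π) :=
  arccos_image_Icc ▸ arccos_injOn.bijOn_image

theorem rbar_center_bijection (d : ℝ) (hd : d ∈ Set.Ioo (-1 : ℝ) 1) :
    ContinuousOn (fun θ => d + rbar d θ * Real.cos θ) (Set.Icc 0 π) ∧
    StrictAntiOn (fun θ => d + rbar d θ * Real.cos θ) (Set.Icc 0 π) ∧
    d + rbar d 0 * Real.cos 0 = 1 ∧
    d + rbar d π * Real.cos π = -1 ∧
    Set.BijOn (fun θ => d + rbar d θ * Real.cos θ) (Set.Icc 0 π) (Set.Icc (-1) 1) ∧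
    Set.BijOn (fun θ => Real.arccos (d + rbar d θ * Real.cos θ)) (Set.Icc 0 π) (Set.Icc 0 π) ∧
    (∀ θ ∈ Set.Ioo (0 : ℝ) π,
      HasDerivAt (fun θ' => rbar d θ' * Real.cos θ')
        (-(rbar d θ) ^ 2 * Real.sin θ / Real.sqrt (1 - d ^ 2 * Real.sin θ ^ 2)) θ ∧
      -(rbar d θ) ^ 2 * Real.sin θ / Real.sqrt (1 - d ^ 2 * Real.sin θ ^ 2) ≤ 0) := by
  have hd2 : d ^ 2 < 1 := (sq_lt_one_iff_abs_lt_one d).2 (abs_lt.2 hd)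
  have hcont : ContinuousOn (fun θ => d + rbar d θ * cos θ) (Icc 0 π) := by fun_prop
  have hanti := strictAntiOn_add_rbar_mul_cos hd2
  have hg0 : d + rbar d 0 * cos 0 = 1 := by rw [rbar_zero, cos_zero]; ring
  have hgπ : d + rbar d π * cos π = -1 := by rw [rbar_pi, cos_pi]; ring
  have hbij : BijOn (fun θ => d + rbar d θ * cos θ) (Icc 0 π) (Icc (-1) 1) := by
    have himage := hcont.image_Icc_of_antitoneOn pi_pos.le hanti.antitoneOn
    rw [hg0, hgπ] at himage
    exact himage ▸ hanti.injOn.bijOn_image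
  exact ⟨hcont, hanti, hg0, hgπ, hbij, bijOn_arccos.comp hbij, fun θ hθ =>
    ⟨hasDerivAt_rbar_mul_cos (one_sub_sq_mul_sin_sq_pos hd2 θ),
      (neg_rbar_sq_mul_sin_div_sqrt_neg hd2 hθ).le⟩⟩
end
end

section
/- Integral identity for the off-center spherical parametrization: For every d ∈ [−1,1], (1/4) ∫₀^π r̄_d(θ)² sin θ (1 − (1/2) sin² θ) dθ = 1/3 − d²/15. Equivalently, the transported-center velocity of the sphere parametrized by r̄_d satisfies ċ₃[r̄_d] := −(1/4) ∫₀^π r̄_d(θ)² sin θ (1 − (1/2) sin² θ) dθ = −4/15 + (d² − 1)/15. -/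
/- Integral identity for the off-center spherical parametrization:
   (1/4) ∫₀^π r̄_d(θ)² sin θ (1 − sin²θ/2) dθ = 1/3 − d²/15, equivalently the transported-center
   velocity of the sphere parametrized by r̄_d is ċ₃[r̄_d] = −4/15 + (d² − 1)/15. -/

noncomputable section
open MeasureTheory Real Set Filter

/-! Expanding the square, `r̄_d(θ)² = 1 - d² + 2d² cos² θ - 2d cos θ √(1 - d² sin² θ)` when `|d| ≤ 1`.
Against the weight `sin θ (1 - sin² θ / 2)` the cross term changes sign under `θ ↦ π - θ`, so it
integrates to zero; the rest is `sin θ` times a polynomial in `cos θ`, integrated by `u = cos θ`. -/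

theorem intervalIntegral.integral_eq_zero_of_comp_add_sub_eq_neg {E : Type*}
    [NormedAddCommGroup E] [NormedSpace ℝ E] {f : ℝ → E} {a b : ℝ}
    (hf : ∀ x, f (a + b - x) = -f x) : ∫ x in a..b, f x = 0 := by
  have h := intervalIntegral.integral_comp_sub_left f (a + b) (a := a) (b := b)
  simp only [hf, intervalIntegral.integral_neg, add_sub_cancel_right, add_sub_cancel_left] at h
  have h2 : (2 : ℝ) • ∫ x in a..b, f x = 0 := by
    rw [two_smul]
    nth_rw 1 [← h]
    exact neg_add_cancel _
  simpa using h2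

theorem intervalIntegral.integral_sin_smul_comp_cos {E : Type*}
    [NormedAddCommGroup E] [NormedSpace ℝ E] {g : ℝ → E} (hg : Continuous g) :
    ∫ θ in (0 : ℝ)..π, sin θ • g (cos θ) = ∫ u in (-1 : ℝ)..1, g u := by
  have h := intervalIntegral.integral_deriv_smul_comp (a := 0) (b := π)
    (fun θ _ => hasDerivAt_cos θ) (continuous_sin.neg.continuousOn) hg
  simp only [Function.comp_apply, neg_smul, intervalIntegral.integral_neg, cos_zero, cos_pi] at h
  rw [intervalIntegral.integral_symm 1 (-1), ← h, neg_neg]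

theorem rbar_sq {d : ℝ} (hd : d ∈ Icc (-1 : ℝ) 1) (θ : ℝ) :
    rbar d θ ^ 2 = 1 - d ^ 2 + 2 * d ^ 2 * cos θ ^ 2
      - 2 * d * cos θ * √(1 - d ^ 2 * sin θ ^ 2) := by
  have hd_sq : d ^ 2 ≤ 1 := by nlinarith [hd.1, hd.2]
  have h : √(1 - d ^ 2 * sin θ ^ 2) ^ 2 = 1 - d ^ 2 * sin θ ^ 2 :=
    sq_sqrt (by nlinarith [sin_sq_le_one θ, sq_nonneg (sin θ)])
  rw [rbar]
  linear_combination h - d ^ 2 * sin_sq_add_cos_sq θ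

theorem integral_rbar_sq_even_part (d : ℝ) :
    ∫ u in (-1 : ℝ)..1, (1 - d ^ 2 + 2 * d ^ 2 * u ^ 2) * (1 + u ^ 2) / 2
      = 4 / 3 - 4 * d ^ 2 / 15 := by
  have hexpand : ∀ u : ℝ, (1 - d ^ 2 + 2 * d ^ 2 * u ^ 2) * (1 + u ^ 2) / 2
      = (1 - d ^ 2) / 2 + (1 + d ^ 2) / 2 * u ^ 2 + d ^ 2 * u ^ 4 := fun u => by ring
  simp only [hexpand]
  rw [intervalIntegral.integral_add, intervalIntegral.integral_add]
  · simp only [intervalIntegral.integral_const, intervalIntegral.integral_const_mul, integral_pow,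
      smul_eq_mul]
    ring
  all_goals exact Continuous.intervalIntegrable (by fun_prop) _ _

theorem rbar_center_velocity_integral (d : ℝ) (hd : d ∈ Set.Icc (-1 : ℝ) 1) :
    (1 / 4) * (∫ θ in (0:ℝ)..π, rbar d θ ^ 2 * Real.sin θ * (1 - Real.sin θ ^ 2 / 2))
      = 1 / 3 - d ^ 2 / 15 ∧
    -(1 / 4) * (∫ θ in (0:ℝ)..π, rbar d θ ^ 2 * Real.sin θ * (1 - Real.sin θ ^ 2 / 2))
      = -(4 / 15) + (d ^ 2 - 1) / 15 := by
  set p : ℝ → ℝ := fun u => (1 - d ^ 2 + 2 * d ^ 2 * u ^ 2) * (1 + u ^ 2) / 2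
  set q : ℝ → ℝ := fun θ =>
    2 * d * cos θ * √(1 - d ^ 2 * sin θ ^ 2) * sin θ * (1 - sin θ ^ 2 / 2)
  have hsplit : ∀ θ, rbar d θ ^ 2 * sin θ * (1 - sin θ ^ 2 / 2) = sin θ * p (cos θ) - q θ := by
    intro θ
    simp only [p, q, rbar_sq hd, sin_sq]
    ring
  have hq : ∫ θ in (0:ℝ)..π, q θ = 0 :=
    intervalIntegral.integral_eq_zero_of_comp_add_sub_eq_neg fun θ => by
      simp only [q, zero_add, cos_pi_sub, sin_pi_sub]
      ring
  have hI : ∫ θ in (0:ℝ)..π, rbar d θ ^ 2 * sin θ * (1 - sin θ ^ 2 / 2)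
      = 4 / 3 - 4 * d ^ 2 / 15 := by
    simp_rw [hsplit]
    rw [intervalIntegral.integral_sub, hq, sub_zero]
    · exact (intervalIntegral.integral_sin_smul_comp_cos (g := p) (by fun_prop)).trans
        (integral_rbar_sq_even_part d)
    all_goals exact Continuous.intervalIntegrable (by fun_prop) _ _
  rw [hI]
  constructor <;> ring
end
end
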